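/- arXiv:1708.07205 — 3 statements merged into one kernel-verified Lean document; each statement's English description precedes it below -/
import Mathlib

section
/- Let A be a rigid symmetric monoidal category, let D be a monoidal category, and let F, G : A ⥤ D be strong monoidal functors. Let c be an object of D equipped with a family of morphisms φ_a : F(a) ⊗ c ⟶ c ⊗ G(a), natural in a ∈ A, which is compatible with units (φ at the monoidal unit of A agrees, via the monoidal structure isomorphisms of F and G and the unitors of D, with the identity of c) and multiplicative (for all a₁, a₂ ∈ A, the morphism φ_{a₁ ⊗ a₂} agrees, via the monoidal structure isomorphisms of F and G and the associators of D, with the composite (F(a₁) ⊗ F(a₂)) ⊗ c ⟶ F(a₁) ⊗ (c ⊗ G(a₂)) ⟶ (c ⊗ G(a₁)) ⊗ G(a₂) obtained by applying φ_{a₂} and then φ_{a₁}). Then every morphism φ_a is an isomorphism. -/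
/-! Strong monoidal functors carry an exact pairing `(a, aᘁ)` to exact pairings `(F a, F aᘁ)` and
`(G a, G aᘁ)`. Multiplicativity, naturality and unitality of `φ` show that `φ_{aᘁ}` stacked on
`φ_a` is compatible with the evaluations `F(ε)`, `G(ε)` and with the coevaluations `F(η)`, `G(η)`.
The zigzag identities then say that the mate of `φ_{aᘁ}` under the two pairings is a two-sided
inverse of `φ_a`. -/

open CategoryTheory MonoidalCategory Functor.LaxMonoidal Functor.OplaxMonoidal

namespace CategoryTheory

variable {A D : Type*} [Category A] [MonoidalCategory A] [Category D] [MonoidalCategory D]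

open Functor.Monoidal in
instance Functor.Monoidal.exactPairing (F : A ⥤ D) [F.Monoidal] (X Y : A) [ExactPairing X Y] :
    ExactPairing (F.obj X) (F.obj Y) where
  coevaluation' := ε F ≫ F.map (η_ X Y) ≫ δ F X Y
  evaluation' := μ F Y X ≫ F.map (ε_ X Y) ≫ η F
  coevaluation_evaluation' := calc
    _ = F.obj Y ◁ ε F ≫ μ F Y (𝟙_ A) ≫ F.map ((ρ_ Y).hom ≫ (λ_ Y).inv) ≫
          δ F (𝟙_ A) Y ≫ η F ▷ F.obj Y := by
      rw [← ExactPairing.coevaluation_evaluation X Y]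
      simp only [Functor.map_comp, map_whiskerRight, map_associator_inv, map_whiskerLeft,
        Category.assoc, μ_δ_assoc, MonoidalCategory.whiskerLeft_comp,
        MonoidalCategory.comp_whiskerRight]
    _ = _ := by simp
  evaluation_coevaluation' := calc
    _ = ε F ▷ F.obj X ≫ μ F (𝟙_ A) X ≫ F.map ((λ_ X).hom ≫ (ρ_ X).inv) ≫
          δ F X (𝟙_ A) ≫ F.obj X ◁ η F := by
      rw [← ExactPairing.evaluation_coevaluation X Y]
      simp only [Functor.map_comp, map_whiskerRight, map_associator, map_whiskerLeft,
        Category.assoc, μ_δ_assoc, MonoidalCategory.whiskerLeft_comp,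
        MonoidalCategory.comp_whiskerRight]
    _ = _ := by simp

theorem isIso_of_exactPairing_compat {X Y X' Y' c : D} [ExactPairing X Y] [ExactPairing X' Y']
    (φ : X ⊗ c ⟶ c ⊗ X') (ψ : Y ⊗ c ⟶ c ⊗ Y')
    (hε : Y ◁ φ ≫ (α_ Y c X').inv ≫ ψ ▷ X' ≫ (α_ c Y' X').hom ≫ c ◁ ε_ X' Y' =
      (α_ Y X c).inv ≫ ε_ X Y ▷ c ≫ (λ_ c).hom ≫ (ρ_ c).inv)
    (hη : η_ X Y ▷ c ≫ (α_ X Y c).hom ≫ X ◁ ψ ≫ (α_ X c Y').inv ≫ φ ▷ Y' ≫ (α_ c X' Y').hom =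
      (λ_ c).hom ≫ (ρ_ c).inv ≫ c ◁ η_ X' Y') :
    IsIso φ := by
  refine ⟨𝟙 _ ⊗≫ η_ X Y ▷ (c ⊗ X') ⊗≫ X ◁ ψ ▷ X' ⊗≫ X ◁ c ◁ ε_ X' Y' ⊗≫ 𝟙 _, ?_, ?_⟩
  · calc φ ≫ (𝟙 _ ⊗≫ η_ X Y ▷ (c ⊗ X') ⊗≫ X ◁ ψ ▷ X' ⊗≫ X ◁ c ◁ ε_ X' Y' ⊗≫ 𝟙 _)
        = 𝟙 _ ⊗≫ (𝟙_ D ◁ φ ≫ η_ X Y ▷ (c ⊗ X')) ⊗≫ X ◁ ψ ▷ X' ⊗≫ X ◁ c ◁ ε_ X' Y' ⊗≫ 𝟙 _ := by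
          monoidal
      _ = 𝟙 _ ⊗≫ η_ X Y ▷ (X ⊗ c) ⊗≫
            X ◁ (Y ◁ φ ≫ (α_ Y c X').inv ≫ ψ ▷ X' ≫ (α_ c Y' X').hom ≫ c ◁ ε_ X' Y') ⊗≫ 𝟙 _ := by
          rw [whisker_exchange]; monoidal
      _ = 𝟙 _ ⊗≫ (η_ X Y ▷ X ⊗≫ X ◁ ε_ X Y) ▷ c ⊗≫ 𝟙 _ := by
          rw [hε]; monoidal
      _ = 𝟙 _ := by
          rw [ExactPairing.evaluation_coevaluation'']; monoidal
  · calc (𝟙 (c ⊗ X') ⊗≫ η_ X Y ▷ (c ⊗ X') ⊗≫ X ◁ ψ ▷ X' ⊗≫ X ◁ c ◁ ε_ X' Y' ⊗≫ 𝟙 _) ≫ φ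
        = 𝟙 _ ⊗≫ η_ X Y ▷ (c ⊗ X') ⊗≫ X ◁ ψ ▷ X' ⊗≫ ((X ⊗ c) ◁ ε_ X' Y' ≫ φ ▷ 𝟙_ D) ⊗≫ 𝟙 _ := by
          monoidal
      _ = 𝟙 _ ⊗≫ (η_ X Y ▷ c ≫ (α_ X Y c).hom ≫ X ◁ ψ ≫ (α_ X c Y').inv ≫ φ ▷ Y' ≫
            (α_ c X' Y').hom) ▷ X' ⊗≫ c ◁ X' ◁ ε_ X' Y' ⊗≫ 𝟙 _ := by
          rw [whisker_exchange]; monoidal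
      _ = 𝟙 _ ⊗≫ c ◁ (η_ X' Y' ▷ X' ⊗≫ X' ◁ ε_ X' Y') ⊗≫ 𝟙 _ := by
          rw [hη]; monoidal
      _ = 𝟙 _ := by
          rw [ExactPairing.evaluation_coevaluation'']; monoidal

structure RightLaxCentralStructure (F G : A ⥤ D) [F.Monoidal] [G.Monoidal] (c : D) where
  app (a : A) : F.obj a ⊗ c ⟶ c ⊗ G.obj a
  naturality {a b : A} (f : a ⟶ b) : F.map f ▷ c ≫ app b = app a ≫ c ◁ G.map f
  app_unit : app (𝟙_ A) = η F ▷ c ≫ (λ_ c).hom ≫ (ρ_ c).inv ≫ c ◁ ε G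
  app_tensor (a₁ a₂ : A) : μ F a₁ a₂ ▷ c ≫ app (a₁ ⊗ a₂) =
    (α_ _ _ c).hom ≫ F.obj a₁ ◁ app a₂ ≫ (α_ _ c _).inv ≫ app a₁ ▷ G.obj a₂ ≫
      (α_ c _ _).hom ≫ c ◁ μ G a₁ a₂

namespace RightLaxCentralStructure

variable {F G : A ⥤ D} [F.Monoidal] [G.Monoidal] {c : D} (Φ : RightLaxCentralStructure F G c)

theorem whiskerLeft_app_comp_app_whiskerRight (a₁ a₂ : A) :
    F.obj a₁ ◁ Φ.app a₂ ≫ (α_ _ c _).inv ≫ Φ.app a₁ ▷ G.obj a₂ =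
      (α_ _ _ c).inv ≫ μ F a₁ a₂ ▷ c ≫ Φ.app (a₁ ⊗ a₂) ≫ c ◁ δ G a₁ a₂ ≫ (α_ c _ _).inv := by
  rw [reassoc_of% (Φ.app_tensor a₁ a₂)]
  simp

theorem whiskerLeft_app_comp_app_whiskerRight_toUnit {a₁ a₂ : A} (f : a₁ ⊗ a₂ ⟶ 𝟙_ A) :
    F.obj a₁ ◁ Φ.app a₂ ≫ (α_ _ c _).inv ≫ Φ.app a₁ ▷ G.obj a₂ ≫ (α_ c _ _).hom ≫
        c ◁ (μ G a₁ a₂ ≫ G.map f ≫ η G) =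
      (α_ _ _ c).inv ≫ (μ F a₁ a₂ ≫ F.map f ≫ η F) ▷ c ≫ (λ_ c).hom ≫ (ρ_ c).inv := by
  rw [reassoc_of% Φ.whiskerLeft_app_comp_app_whiskerRight]
  simp only [Iso.inv_hom_id_assoc, MonoidalCategory.whiskerLeft_comp, comp_whiskerRight,
    Category.assoc, Functor.Monoidal.whiskerLeft_δ_μ_assoc]
  rw [← reassoc_of% (Φ.naturality f), Φ.app_unit]
  simp

theorem fromUnit_whiskerRight_comp_whiskerLeft_app_comp_app_whiskerRight {a₁ a₂ : A}
    (g : 𝟙_ A ⟶ a₁ ⊗ a₂) :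
    (ε F ≫ F.map g ≫ δ F a₁ a₂) ▷ c ≫ (α_ _ _ c).hom ≫ F.obj a₁ ◁ Φ.app a₂ ≫ (α_ _ c _).inv ≫
        Φ.app a₁ ▷ G.obj a₂ ≫ (α_ c _ _).hom =
      (λ_ c).hom ≫ (ρ_ c).inv ≫ c ◁ (ε G ≫ G.map g ≫ δ G a₁ a₂) := by
  rw [reassoc_of% Φ.whiskerLeft_app_comp_app_whiskerRight]
  simp only [Iso.hom_inv_id_assoc, MonoidalCategory.whiskerLeft_comp, comp_whiskerRight,
    Category.assoc, Functor.Monoidal.whiskerRight_δ_μ_assoc, Iso.inv_hom_id, Category.comp_id]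
  rw [reassoc_of% (Φ.naturality g), Φ.app_unit]
  simp

theorem isIso_app (a : A) [HasRightDual a] : IsIso (Φ.app a) :=
  isIso_of_exactPairing_compat (Φ.app a) (Φ.app aᘁ)
    (Φ.whiskerLeft_app_comp_app_whiskerRight_toUnit (ε_ a aᘁ))
    (Φ.fromUnit_whiskerRight_comp_whiskerLeft_app_comp_app_whiskerRight (η_ a aᘁ))

end RightLaxCentralStructure

end CategoryTheory

theorem rightLaxCentralStructure_isIso_general
    {A : Type*} [Category A] [MonoidalCategory A]
    [RigidCategory A]
    {D : Type*} [Category D] [MonoidalCategory D]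
    (F G : A ⥤ D) [F.Monoidal] [G.Monoidal] (c : D)
    (φ : ∀ a : A, F.obj a ⊗ c ⟶ c ⊗ G.obj a)
    (hnat : ∀ {a b : A} (f : a ⟶ b),
      (F.map f ⊗ₘ 𝟙 c) ≫ φ b = φ a ≫ (𝟙 c ⊗ₘ G.map f))
    (hunit : φ (𝟙_ A) =
      (inv (ε F) ⊗ₘ 𝟙 c) ≫ (λ_ c).hom ≫ (ρ_ c).inv ≫ (𝟙 c ⊗ₘ ε G))
    (hmul : ∀ a₁ a₂ : A,
      (μ F a₁ a₂ ⊗ₘ 𝟙 c) ≫ φ (a₁ ⊗ a₂) =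
        (α_ (F.obj a₁) (F.obj a₂) c).hom ≫ (𝟙 (F.obj a₁) ⊗ₘ φ a₂) ≫
          (α_ (F.obj a₁) c (G.obj a₂)).inv ≫ (φ a₁ ⊗ₘ 𝟙 (G.obj a₂)) ≫
          (α_ c (G.obj a₁) (G.obj a₂)).hom ≫ (𝟙 c ⊗ₘ μ G a₁ a₂)) :
    ∀ a : A, IsIso (φ a) := by
  simp only [id_tensorHom, tensorHom_id, Functor.Monoidal.inv_ε] at hnat hunit hmul
  exact fun a ↦ RightLaxCentralStructure.isIso_app ⟨φ, hnat, hunit, hmul⟩ a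

/-- Let `A` be a rigid symmetric monoidal category, `D` a monoidal category, and
`F, G : A ⥤ D` strong monoidal functors.  If `c : D` carries a right-lax central
structure with respect to `F` and `G`, i.e. a family of morphisms
`φ a : F.obj a ⊗ c ⟶ c ⊗ G.obj a` natural in `a`, compatible with the units and
multiplicative with respect to the tensor product, then every `φ a` is an
isomorphism. -/
theorem rightLaxCentralStructure_isIso
    {A : Type*} [Category A] [MonoidalCategory A] [SymmetricCategory A]
    [RigidCategory A]
    {D : Type*} [Category D] [MonoidalCategory D]
    (F G : A ⥤ D) [F.Monoidal] [G.Monoidal] (c : D)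
    (φ : ∀ a : A, F.obj a ⊗ c ⟶ c ⊗ G.obj a)
    (hnat : ∀ {a b : A} (f : a ⟶ b),
      (F.map f ⊗ₘ 𝟙 c) ≫ φ b = φ a ≫ (𝟙 c ⊗ₘ G.map f))
    (hunit : φ (𝟙_ A) =
      (inv (ε F) ⊗ₘ 𝟙 c) ≫ (λ_ c).hom ≫ (ρ_ c).inv ≫ (𝟙 c ⊗ₘ ε G))
    (hmul : ∀ a₁ a₂ : A,
      (μ F a₁ a₂ ⊗ₘ 𝟙 c) ≫ φ (a₁ ⊗ a₂) =
        (α_ (F.obj a₁) (F.obj a₂) c).hom ≫ (𝟙 (F.obj a₁) ⊗ₘ φ a₂) ≫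
          (α_ (F.obj a₁) c (G.obj a₂)).inv ≫ (φ a₁ ⊗ₘ 𝟙 (G.obj a₂)) ≫
          (α_ c (G.obj a₁) (G.obj a₂)).hom ≫ (𝟙 c ⊗ₘ μ G a₁ a₂)) :
    ∀ a : A, IsIso (φ a) :=
  rightLaxCentralStructure_isIso_general F G c φ hnat hunit hmul
end

section
/- Let A be a rigid monoidal category and let c be an object of A equipped with a family of morphisms φ_a : a ⊗ c ⟶ c ⊗ a, natural in a ∈ A, compatible with the unit (φ at the monoidal unit agrees with the composite of the left and inverse right unitors of c) and multiplicative (for all a₁, a₂, the morphism φ_{a₁ ⊗ a₂} agrees, via the associators, with the composite (a₁ ⊗ a₂) ⊗ c ⟶ a₁ ⊗ (c ⊗ a₂) ⟶ (c ⊗ a₁) ⊗ a₂ obtained by applying φ_{a₂} and then φ_{a₁}). Then every φ_a is an isomorphism; in particular the pair (c, φ) defines an object of the Drinfeld center of A. -/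
/-!
If `a` has a right dual `d`, the inverse of `φ a` is the transpose of `φ d` along the duality:
`c ⊗ a ⟶ a ⊗ d ⊗ c ⊗ a ⟶ a ⊗ c ⊗ d ⊗ a ⟶ a ⊗ c`, using `η` and `ε`. Multiplicativity
rewrites `φ` on `d ⊗ a` and `a ⊗ d` in terms of `φ a` and `φ d`, while naturality and the unit
condition show that `φ` commutes with `ε : d ⊗ a ⟶ 𝟙` and `η : 𝟙 ⟶ a ⊗ d`. Both composites
then collapse to a zigzag identity.
-/

open CategoryTheory MonoidalCategory

namespace CategoryTheory

variable {C : Type*} [Category C] [MonoidalCategory C]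

/-- Mathlib's `HalfBraiding` is an invertible family in the opposite direction `c ⊗ a ≅ a ⊗ c`. -/
structure IsLaxHalfBraiding (c : C) (φ : ∀ a : C, a ⊗ c ⟶ c ⊗ a) : Prop where
  naturality : ∀ {a b : C} (f : a ⟶ b), f ▷ c ≫ φ b = φ a ≫ c ◁ f
  unit : φ (𝟙_ C) = (λ_ c).hom ≫ (ρ_ c).inv
  tensor : ∀ a₁ a₂ : C, φ (a₁ ⊗ a₂) =
    (α_ a₁ a₂ c).hom ≫ a₁ ◁ φ a₂ ≫ (α_ a₁ c a₂).inv ≫ φ a₁ ▷ a₂ ≫ (α_ c a₁ a₂).hom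

variable {c : C}

def laxHalfBraidingInv (φ : ∀ a : C, a ⊗ c ⟶ c ⊗ a) (a d : C) [ExactPairing a d] :
    c ⊗ a ⟶ a ⊗ c :=
  (λ_ (c ⊗ a)).inv ≫ η_ a d ▷ (c ⊗ a) ≫ (α_ a d (c ⊗ a)).hom ≫
    a ◁ ((α_ d c a).inv ≫ φ d ▷ a ≫ (α_ c d a).hom ≫ c ◁ ε_ a d ≫ (ρ_ c).hom)

namespace IsLaxHalfBraiding

variable {φ : ∀ a : C, a ⊗ c ⟶ c ⊗ a}

theorem whiskerRight_fromUnit_comp (hφ : IsLaxHalfBraiding c φ) {a : C} (g : 𝟙_ C ⟶ a) :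
    g ▷ c ≫ φ a = (λ_ c).hom ≫ (ρ_ c).inv ≫ c ◁ g := by
  rw [hφ.naturality, hφ.unit, Category.assoc]

theorem comp_whiskerLeft_toUnit (hφ : IsLaxHalfBraiding c φ) {a : C} (f : a ⟶ 𝟙_ C) :
    φ a ≫ c ◁ f = f ▷ c ≫ (λ_ c).hom ≫ (ρ_ c).inv := by
  rw [← hφ.naturality, hφ.unit]

variable (a d : C) [ExactPairing a d]

theorem hom_inv_id (hφ : IsLaxHalfBraiding c φ) :
    φ a ≫ laxHalfBraidingInv φ a d = 𝟙 (a ⊗ c) := by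
  have tensor_comp_evaluation : d ◁ φ a ≫ (α_ d c a).inv ≫ φ d ▷ a ≫ (α_ c d a).hom ≫
      c ◁ ε_ a d = (α_ d a c).inv ≫ ε_ a d ▷ c ≫ (λ_ c).hom ≫ (ρ_ c).inv := by
    rw [← hφ.comp_whiskerLeft_toUnit, hφ.tensor]
    simp
  calc φ a ≫ laxHalfBraidingInv φ a d
      = (λ_ (a ⊗ c)).inv ≫ η_ a d ▷ (a ⊗ c) ≫ (α_ a d (a ⊗ c)).hom ≫
          a ◁ ((d ◁ φ a ≫ (α_ d c a).inv ≫ φ d ▷ a ≫ (α_ c d a).hom ≫ c ◁ ε_ a d) ≫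
            (ρ_ c).hom) := by
        rw [laxHalfBraidingInv, leftUnitor_inv_naturality_assoc, whisker_exchange_assoc]
        simp
    _ = (λ_ a).inv ▷ c ≫ (η_ a d ▷ a ≫ (α_ a d a).hom ≫ a ◁ ε_ a d) ▷ c ≫
          (ρ_ a).hom ▷ c := by
        rw [tensor_comp_evaluation]
        monoidal
    _ = 𝟙 (a ⊗ c) := by
        rw [ExactPairing.evaluation_coevaluation]
        monoidal

theorem inv_hom_id (hφ : IsLaxHalfBraiding c φ) :
    laxHalfBraidingInv φ a d ≫ φ a = 𝟙 (c ⊗ a) := by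
  have coevaluation_comp_tensor : η_ a d ▷ c ≫ (α_ a d c).hom ≫ a ◁ φ d ≫ (α_ a c d).inv ≫
      φ a ▷ d ≫ (α_ c a d).hom = (λ_ c).hom ≫ (ρ_ c).inv ≫ c ◁ η_ a d := by
    rw [← hφ.whiskerRight_fromUnit_comp, hφ.tensor]
  calc laxHalfBraidingInv φ a d ≫ φ a
      = (λ_ (c ⊗ a)).inv ≫ η_ a d ▷ (c ⊗ a) ≫ (α_ a d (c ⊗ a)).hom ≫
          a ◁ ((α_ d c a).inv ≫ φ d ▷ a ≫ (α_ c d a).hom) ≫ (α_ a c (d ⊗ a)).inv ≫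
          φ a ▷ (d ⊗ a) ≫ (c ⊗ a) ◁ ε_ a d ≫ (ρ_ (c ⊗ a)).hom := by
        rw [laxHalfBraidingInv, ← whisker_exchange_assoc, rightUnitor_naturality]
        monoidal
    _ = (λ_ (c ⊗ a)).inv ≫ (α_ (𝟙_ C) c a).inv ≫
          (η_ a d ▷ c ≫ (α_ a d c).hom ≫ a ◁ φ d ≫ (α_ a c d).inv ≫ φ a ▷ d ≫
            (α_ c a d).hom) ▷ a ≫
          (α_ c (a ⊗ d) a).hom ≫ c ◁ (α_ a d a).hom ≫ (α_ c a (d ⊗ a)).inv ≫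
          (c ⊗ a) ◁ ε_ a d ≫ (ρ_ (c ⊗ a)).hom := by
        monoidal
    _ = c ◁ (λ_ a).inv ≫ c ◁ (η_ a d ▷ a ≫ (α_ a d a).hom ≫ a ◁ ε_ a d) ≫
          c ◁ (ρ_ a).hom := by
        rw [coevaluation_comp_tensor]
        monoidal
    _ = 𝟙 (c ⊗ a) := by
        rw [ExactPairing.evaluation_coevaluation]
        monoidal

theorem isIso (hφ : IsLaxHalfBraiding c φ) (b : C) [HasRightDual b] : IsIso (φ b) :=
  ⟨⟨laxHalfBraidingInv φ b bᘁ, hφ.hom_inv_id b bᘁ, hφ.inv_hom_id b bᘁ⟩⟩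

end IsLaxHalfBraiding

end CategoryTheory

/-- Over a rigid monoidal category `A`, any lax half-braiding on an object `c`
(a family `φ a : a ⊗ c ⟶ c ⊗ a`, natural in `a`, compatible with the unit and
multiplicative with respect to tensor products, but not assumed invertible) is a
genuine half-braiding: every `φ a` is an isomorphism.  In particular `(c, φ)`
defines an object of the Drinfeld center of `A`. -/
theorem laxHalfBraiding_isIso
    {A : Type*} [Category A] [MonoidalCategory A] [RigidCategory A]
    (c : A) (φ : ∀ a : A, a ⊗ c ⟶ c ⊗ a)
    (hnat : ∀ {a b : A} (f : a ⟶ b),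
      (f ⊗ₘ 𝟙 c) ≫ φ b = φ a ≫ (𝟙 c ⊗ₘ f))
    (hunit : φ (𝟙_ A) = (λ_ c).hom ≫ (ρ_ c).inv)
    (hmul : ∀ a₁ a₂ : A,
      φ (a₁ ⊗ a₂) =
        (α_ a₁ a₂ c).hom ≫ (𝟙 a₁ ⊗ₘ φ a₂) ≫ (α_ a₁ c a₂).inv ≫
          (φ a₁ ⊗ₘ 𝟙 a₂) ≫ (α_ c a₁ a₂).hom) :
    ∀ a : A, IsIso (φ a) := by
  have hφ : IsLaxHalfBraiding c φ :=
    ⟨fun f ↦ by simpa only [tensorHom_id, id_tensorHom] using hnat f, hunit,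
      fun a₁ a₂ ↦ by simpa only [tensorHom_id, id_tensorHom] using hmul a₁ a₂⟩
  exact fun a ↦ hφ.isIso a
end

section
/- Let FinSurj denote the category whose objects are finite nonempty sets and whose morphisms are surjections. Let TwArr denote the category whose objects are surjections φ : J ↠ K in FinSurj, and in which a morphism from (φ₁ : J₁ ↠ K₁) to (φ₂ : J₂ ↠ K₂) is a pair of surjections ψ_J : J₁ ↠ J₂ and ψ_K : K₂ ↠ K₁ such that φ₁ = ψ_K ∘ φ₂ ∘ ψ_J. For a finite nonempty set I, let TwArr_{I/} denote the category whose objects are pairs of composable surjections I ↠ J ↠ K and whose morphisms from (I ↠ J₁ ↠ K₁) to (I ↠ J₂ ↠ K₂) are pairs (ψ_J : J₁ ↠ J₂, ψ_K : K₂ ↠ K₁) with ψ_J compatible with the given surjections from I and satisfying φ₁ = ψ_K ∘ φ₂ ∘ ψ_J. Precomposition makes I ↦ TwArr_{I/} a functor from FinSurj^op to the category of categories. Then the projection functor from the Grothendieck construction of this functor to TwArr, sending (I, I ↠ J ↠ K) to (J ↠ K), is a final (cofinal) functor: for every functor from TwArr to any cocomplete category, restriction along this projection does not change the colimit. -/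
open CategoryTheory

universe u

/-- The category of finite nonempty sets with surjective maps as morphisms. -/
structure FinSurjCat : Type (u + 1) where
  carrier : Type u
  [fintype : Fintype carrier]
  [nonempty : Nonempty carrier]

namespace FinSurjCat

attribute [instance] fintype nonempty

instance : CoeSort FinSurjCat.{u} (Type u) :=
  ⟨FinSurjCat.carrier⟩

instance : Category FinSurjCat.{u} where
  Hom J K := { f : J → K // Function.Surjective f }
  id J := ⟨_root_.id, Function.surjective_id⟩
  comp f g := ⟨g.1 ∘ f.1, g.2.comp f.2⟩
  id_comp f := Subtype.ext rfl
  comp_id f := Subtype.ext rfl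
  assoc f g h := Subtype.ext rfl

end FinSurjCat

/-- The twisted-arrows category `TwArr`: objects are surjections `φ : J ↠ K` of
finite nonempty sets; a morphism `(J₁ ↠ K₁) ⟶ (J₂ ↠ K₂)` is a pair of surjections
`ψJ : J₁ ↠ J₂` and `ψK : K₂ ↠ K₁` with `φ₁ = ψK ∘ φ₂ ∘ ψJ`. -/
structure TwArr : Type (u + 1) where
  J : FinSurjCat.{u}
  K : FinSurjCat.{u}
  φ : J ⟶ K

namespace TwArr

/-- Morphisms in `TwArr`. -/
structure Hom (t₁ t₂ : TwArr.{u}) where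
  ψJ : t₁.J ⟶ t₂.J
  ψK : t₂.K ⟶ t₁.K
  w : t₁.φ = ψJ ≫ t₂.φ ≫ ψK

lemma Hom.ext' {t₁ t₂ : TwArr.{u}} {f g : Hom t₁ t₂}
    (h₁ : f.ψJ = g.ψJ) (h₂ : f.ψK = g.ψK) : f = g := by
  cases f; cases g; cases h₁; cases h₂; rfl

instance : Category TwArr.{u} where
  Hom := Hom
  id t := ⟨𝟙 t.J, 𝟙 t.K, by simp⟩
  comp {t₁ t₂ t₃} f g :=
    ⟨f.ψJ ≫ g.ψJ, g.ψK ≫ f.ψK, by rw [f.w, g.w]; simp⟩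
  id_comp f := Hom.ext' (by simp) (by simp)
  comp_id f := Hom.ext' (by simp) (by simp)
  assoc f g h := Hom.ext' (by simp) (by simp)

end TwArr

/-- The Grothendieck construction (total category) of the functor
`FinSurjCat^op ⥤ Cat` sending a finite nonempty set `I` to the category
`TwArr_{I/}` of pairs of composable surjections `I ↠ J ↠ K` (with morphisms as
in `TwArr`, compatible with the maps from `I`), the functoriality in `I` being
given by precomposition.  Its objects are triples `(I, I ↠ J ↠ K)`; a morphism
`(I₁, I₁ ↠ J₁ ↠ K₁) ⟶ (I₂, I₂ ↠ J₂ ↠ K₂)` consists of a base morphism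
`op I₁ ⟶ op I₂` (i.e. a surjection `σ : I₂ ↠ I₁`) together with a morphism
`(I₂ ↠ J₁ ↠ K₁) ⟶ (I₂ ↠ J₂ ↠ K₂)` in `TwArr_{I₂/}`, where the first object is
obtained by precomposing with `σ`. -/
structure TwArrGrothendieck : Type (u + 1) where
  I : FinSurjCat.{u}
  J : FinSurjCat.{u}
  K : FinSurjCat.{u}
  p : I ⟶ J
  φ : J ⟶ K

namespace TwArrGrothendieck

/-- Morphisms in the Grothendieck construction. -/
structure Hom (t₁ t₂ : TwArrGrothendieck.{u}) where
  σ : t₂.I ⟶ t₁.I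
  ψJ : t₁.J ⟶ t₂.J
  ψK : t₂.K ⟶ t₁.K
  wp : (σ ≫ t₁.p) ≫ ψJ = t₂.p
  w : t₁.φ = ψJ ≫ t₂.φ ≫ ψK

lemma Hom.ext' {t₁ t₂ : TwArrGrothendieck.{u}} {f g : Hom t₁ t₂}
    (h₀ : f.σ = g.σ) (h₁ : f.ψJ = g.ψJ) (h₂ : f.ψK = g.ψK) : f = g := by
  cases f; cases g; cases h₀; cases h₁; cases h₂; rfl

instance : Category TwArrGrothendieck.{u} where
  Hom := Hom
  id t := ⟨𝟙 t.I, 𝟙 t.J, 𝟙 t.K, by simp, by simp⟩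
  comp {t₁ t₂ t₃} f g :=
    ⟨g.σ ≫ f.σ, f.ψJ ≫ g.ψJ, g.ψK ≫ f.ψK,
      by rw [← g.wp, ← f.wp]; simp,
      by rw [f.w, g.w]; simp⟩
  id_comp f := Hom.ext' (by simp) (by simp) (by simp)
  comp_id f := Hom.ext' (by simp) (by simp) (by simp)
  assoc f g h := Hom.ext' (by simp) (by simp) (by simp)

end TwArrGrothendieck

/-- The projection from the Grothendieck construction of `I ↦ TwArr_{I/}` to
`TwArr`, sending `(I, I ↠ J ↠ K)` to `(J ↠ K)`. -/
def twArrProjection : TwArrGrothendieck.{u} ⥤ TwArr.{u} where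
  obj t := ⟨t.J, t.K, t.φ⟩
  map f := ⟨f.ψJ, f.ψK, f.w⟩
  map_id t := rfl
  map_comp f g := rfl

/-!
The comma category `t / twArrProjection` is connected for every `t = (J ↠ K)`, with base point
`(J, J = J ↠ K)` over the identity of `t`. Given any other object, `I ↠ J' ↠ K'` together
with `(ψJ, ψK) : t ⟶ (J' ↠ K')`, replace `I` by the fibre product `I ×_{J'} J`. The new object receives a map from the given one, by its first projection, and
a map from the base point, by the second projection together with `(ψJ, ψK)`. This gives a
zigzag of length two.
-/

namespace FinSurjCat

variable {I J X : FinSurjCat.{u}}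

noncomputable def pullback (f : I ⟶ X) (g : J ⟶ X) : FinSurjCat.{u} where
  carrier := {q : I × J // f.1 q.1 = g.1 q.2}
  fintype := Fintype.ofFinite _
  nonempty := by
    obtain ⟨i⟩ := I.nonempty
    obtain ⟨j, hj⟩ := g.2 (f.1 i)
    exact ⟨⟨(i, j), hj.symm⟩⟩

def pullbackFst (f : I ⟶ X) (g : J ⟶ X) : pullback f g ⟶ I :=
  ⟨fun q => q.1.1, fun i => by
    obtain ⟨j, hj⟩ := g.2 (f.1 i)
    exact ⟨⟨(i, j), hj.symm⟩, rfl⟩⟩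

def pullbackSnd (f : I ⟶ X) (g : J ⟶ X) : pullback f g ⟶ J :=
  ⟨fun q => q.1.2, fun j => by
    obtain ⟨i, hi⟩ := f.2 (g.1 j)
    exact ⟨⟨(i, j), hi⟩, rfl⟩⟩

theorem pullback_condition (f : I ⟶ X) (g : J ⟶ X) :
    pullbackFst f g ≫ f = pullbackSnd f g ≫ g :=
  Subtype.ext (funext fun q => q.2)

end FinSurjCat

namespace TwArrGrothendieck

def reindex (t : TwArrGrothendieck.{u}) {I' : FinSurjCat.{u}} (σ : I' ⟶ t.I) :
    TwArrGrothendieck.{u} :=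
  ⟨I', t.J, t.K, σ ≫ t.p, t.φ⟩

def toReindex (t : TwArrGrothendieck.{u}) {I' : FinSurjCat.{u}} (σ : I' ⟶ t.I) :
    t ⟶ t.reindex σ :=
  ⟨σ, 𝟙 t.J, 𝟙 t.K, Category.comp_id _, by simp [reindex]⟩

def ofTwArr (t : TwArr.{u}) : TwArrGrothendieck.{u} :=
  ⟨t.J, t.J, t.K, 𝟙 t.J, t.φ⟩

end TwArrGrothendieck

open TwArrGrothendieck FinSurjCat

namespace TwArr

def structuredArrowBase (t : TwArr.{u}) : StructuredArrow t twArrProjection.{u} :=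
  StructuredArrow.mk (Y := ofTwArr t) (𝟙 t)

theorem zigzag_structuredArrowBase {t : TwArr.{u}}
    (X : StructuredArrow t twArrProjection.{u}) : Zigzag X (structuredArrowBase t) := by
  let fst := pullbackFst X.right.p X.hom.ψJ
  let M : StructuredArrow t twArrProjection.{u} :=
    StructuredArrow.mk (Y := X.right.reindex fst) X.hom
  let fromX : X ⟶ M := StructuredArrow.homMk (X.right.toReindex fst) (Category.comp_id _)
  let fromBase : structuredArrowBase t ⟶ M :=
    StructuredArrow.homMk
      ⟨pullbackSnd X.right.p X.hom.ψJ, X.hom.ψJ, X.hom.ψK,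
        (pullback_condition X.right.p X.hom.ψJ).symm, X.hom.w⟩
      (Hom.ext' rfl rfl)
  exact (Zigzag.of_hom fromX).trans (Zigzag.of_inv fromBase)

end TwArr

/-- The projection `(I, I ↠ J ↠ K) ↦ (J ↠ K)` from the Grothendieck construction
of the functor `I ↦ TwArr_{I/} : FinSurjCat^op ⥤ Cat` to the twisted-arrows
category `TwArr` is a final (cofinal) functor: restriction along it does not
change colimits. -/
theorem twArrProjection_final : twArrProjection.{u}.Final := by
  refine ⟨fun t => ?_⟩
  have : Nonempty (StructuredArrow t twArrProjection.{u}) := ⟨TwArr.structuredArrowBase t⟩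
  exact zigzag_isConnected fun X Y =>
    (TwArr.zigzag_structuredArrowBase X).trans (TwArr.zigzag_structuredArrowBase Y).symm
end
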